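/- arXiv:2310.15189 — 3 statements merged into one kernel-verified Lean document; each statement's English description precedes it below -/
import Mathlib

section
/- Let M be a positive natural number. Every continuous permutation-invariant function f : (Fin M → ℝ) → ℝ is continuously sum-decomposable through ℝ^M: there exist a continuous function ψ : ℝ → (Fin M → ℝ) and a continuous function ρ : (Fin M → ℝ) → ℝ such that f x = ρ (∑ i, ψ (x i)) for every x : Fin M → ℝ. -/
/-!
By Newton's identities the power sums `∑ᵢ xᵢ ^ k`, `1 ≤ k ≤ M`, determine the elementary symmetric
functions of `x`, hence the polynomial `∏ᵢ (X - xᵢ)` and the multiset of coordinates. So the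
power-sum map `ℝ^M → ℝ^M` is injective on sorted tuples; it is also proper (for `M ≥ 2` the second
power sum dominates `‖x‖²`), so it embeds the closed set of sorted tuples as a closed subset of
`ℝ^M`. Tietze extends `f`, read through this embedding, to a continuous `ρ`, and
`f x = f (sort x) = ρ (∑ᵢ ψ xᵢ)` with `ψ t = (t, t², …, t^M)`.
-/

open Finset MvPolynomial Filter Topology

section NewtonIdentities

variable {σ K : Type*} [Fintype σ] [Field K] [CharZero K]

theorem MvPolynomial.eval_esymm_eq_of_eval_psum_eq {c d : σ → K} {n : ℕ}
    (h : ∀ k, 0 < k → k ≤ n → eval c (psum σ K k) = eval d (psum σ K k)) (k : ℕ) :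
    k ≤ n → eval c (esymm σ K k) = eval d (esymm σ K k) := by
  induction k using Nat.strong_induction_on with
  | _ k ih =>
    intro hkn
    rcases Nat.eq_zero_or_pos k with rfl | hk
    · simp only [esymm_zero, map_one]
    have newton (x : σ → K) := congrArg (eval x) (mul_esymm_eq_sum σ K k)
    simp only [map_mul, map_sum, map_pow, map_natCast, map_neg, map_one] at newton
    have hsum : ∀ a ∈ (antidiagonal k).filter (·.1 < k),
        (-1 : K) ^ a.1 * eval c (esymm σ K a.1) * eval c (psum σ K a.2)
          = (-1) ^ a.1 * eval d (esymm σ K a.1) * eval d (psum σ K a.2) := by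
      intro a ha
      rw [mem_filter, HasAntidiagonal.mem_antidiagonal] at ha
      rw [ih a.1 ha.2 (by omega), h a.2 (by omega) (by omega)]
    have hk' : (k : K) ≠ 0 := by exact_mod_cast hk.ne'
    exact mul_left_cancel₀ hk' (by rw [newton, newton, sum_congr rfl hsum])

theorem Multiset.map_univ_eq_of_sum_pow_eq {c d : σ → K}
    (h : ∀ k, 0 < k → k ≤ Fintype.card σ → ∑ i, c i ^ k = ∑ i, d i ^ k) :
    univ.val.map c = univ.val.map d := by
  have hesymm (x : σ → K) (j : ℕ) :
      (univ.val.map x).esymm j = eval x (MvPolynomial.esymm σ K j) := by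
    rw [← aeval_esymm_eq_multiset_esymm σ K j x, aeval_eq_eval]
  have hprod : ((univ.val.map c).map fun t => Polynomial.X - Polynomial.C t).prod
      = ((univ.val.map d).map fun t => Polynomial.X - Polynomial.C t).prod := by
    simp only [Multiset.prod_X_sub_X_eq_sum_esymm, Multiset.card_map, hesymm]
    refine sum_congr rfl fun j hj => ?_
    have hpsum k (hk : 0 < k) (hkn : k ≤ Fintype.card σ) :
        eval c (psum σ K k) = eval d (psum σ K k) := by
      simpa [psum] using h k hk hkn
    rw [eval_esymm_eq_of_eval_psum_eq hpsum j (by simpa [Nat.lt_succ_iff] using hj)]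
  simpa only [Polynomial.roots_multiset_prod_X_sub_C] using congrArg Polynomial.roots hprod

end NewtonIdentities

theorem Monotone.eq_of_sum_pow_eq {K : Type*} [Field K] [LinearOrder K] [IsStrictOrderedRing K]
    {M : ℕ} {c d : Fin M → K} (hc : Monotone c) (hd : Monotone d)
    (h : ∀ k, 0 < k → k ≤ M → ∑ i, c i ^ k = ∑ i, d i ^ k) : c = d := by
  have hperm := Multiset.map_univ_eq_of_sum_pow_eq (c := c) (d := d) (by simpa using h)
  rw [Fin.univ_val_map, Fin.univ_val_map, Multiset.coe_eq_coe] at hperm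
  exact List.ofFn_injective (hperm.eq_of_sortedLE hc.sortedLE_ofFn hd.sortedLE_ofFn)

section PowerSums

variable {M : ℕ}

def powerVector (M : ℕ) (t : ℝ) : Fin M → ℝ := fun k => t ^ (k + 1 : ℕ)

def powerSums (M : ℕ) (x : Fin M → ℝ) : Fin M → ℝ := ∑ i, powerVector M (x i)

theorem powerSums_apply (x : Fin M → ℝ) (k : Fin M) :
    powerSums M x k = ∑ i, x i ^ (k + 1 : ℕ) := by
  simp [powerSums, powerVector]

theorem continuous_powerVector (M : ℕ) : Continuous (powerVector M) := by
  unfold powerVector; fun_prop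

theorem continuous_powerSums (M : ℕ) : Continuous (powerSums M) :=
  continuous_finsetSum _ fun i _ => (continuous_powerVector M).comp (continuous_apply i)

theorem powerSums_comp_perm (σ : Equiv.Perm (Fin M)) (x : Fin M → ℝ) :
    powerSums M (x ∘ σ) = powerSums M x :=
  Equiv.sum_comp σ (fun i => powerVector M (x i))

theorem powerSums_injOn_monotone : Set.InjOn (powerSums M) {c | Monotone c} := by
  intro c hc d hd hcd
  refine Monotone.eq_of_sum_pow_eq hc hd fun k hk hkM => ?_
  simpa [powerSums_apply, Nat.sub_add_cancel hk] using congrFun hcd ⟨k - 1, by omega⟩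

theorem sq_norm_le_norm_powerSums (hM : 1 < M) (x : Fin M → ℝ) :
    ‖x‖ ^ 2 ≤ ‖powerSums M x‖ := by
  rw [← Real.le_sqrt (norm_nonneg _) (norm_nonneg _),
    pi_norm_le_iff_of_nonneg (Real.sqrt_nonneg _)]
  refine fun j => Real.abs_le_sqrt ?_
  calc x j ^ 2 ≤ ∑ i, x i ^ 2 := single_le_sum (fun i _ => sq_nonneg (x i)) (mem_univ j)
    _ = powerSums M x ⟨1, hM⟩ := (powerSums_apply x ⟨1, hM⟩).symm
    _ ≤ ‖powerSums M x‖ := (le_abs_self _).trans (norm_le_pi_norm (powerSums M x) _)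

theorem isProperMap_powerSums (hM : 0 < M) : IsProperMap (powerSums M) := by
  obtain rfl | hM := (Nat.succ_le_of_lt hM).eq_or_lt
  · convert isProperMap_id
    ext x k
    simp [powerSums_apply, Subsingleton.elim k 0]
  refine isProperMap_iff_tendsto_cocompact.mpr ⟨continuous_powerSums M, ?_⟩
  rw [← Metric.cobounded_eq_cocompact, ← tendsto_norm_atTop_iff_cobounded]
  exact tendsto_atTop_mono (sq_norm_le_norm_powerSums hM)
    ((tendsto_pow_atTop two_ne_zero).comp tendsto_norm_cobounded_atTop)

theorem isClosedEmbedding_restrict_powerSums (hM : 0 < M) :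
    IsClosedEmbedding fun c : {c : Fin M → ℝ | Monotone c} => powerSums M c :=
  .of_continuous_injective_isClosedMap ((continuous_powerSums M).comp continuous_subtype_val)
    powerSums_injOn_monotone.injective
    ((isProperMap_powerSums hM).restrict isClosed_monotone).isClosedMap

end PowerSums

/-- Every continuous permutation-invariant function `f : (Fin M → ℝ) → ℝ` is
continuously sum-decomposable through `ℝ^M`. -/
theorem perm_invariant_continuous_sum_decomposable (M : ℕ) (hM : 0 < M)
    (f : (Fin M → ℝ) → ℝ) (hf : Continuous f)
    (hinv : ∀ (σ : Equiv.Perm (Fin M)) (x : Fin M → ℝ), f (x ∘ σ) = f x) :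
    ∃ (ψ : ℝ → (Fin M → ℝ)) (ρ : (Fin M → ℝ) → ℝ),
      Continuous ψ ∧ Continuous ρ ∧ ∀ x : Fin M → ℝ, f x = ρ (∑ i, ψ (x i)) := by
  obtain ⟨ρ, hρ⟩ := ContinuousMap.exists_extension' (isClosedEmbedding_restrict_powerSums hM)
    ⟨fun c => f c, hf.comp continuous_subtype_val⟩
  refine ⟨powerVector M, ρ, continuous_powerVector M, ρ.continuous, fun x => ?_⟩
  calc f x = f (x ∘ Tuple.sort x) := (hinv _ x).symm
    _ = ρ (powerSums M (x ∘ Tuple.sort x)) := (congrFun hρ ⟨_, Tuple.monotone_sort x⟩).symm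
    _ = ρ (∑ i, powerVector M (x i)) := by rw [powerSums_comp_perm]; rfl
end

section
/- Let M be a positive natural number. A continuous function f : (Fin M → ℝ) → ℝ is permutation-invariant if and only if there exist a continuous function ψ : ℝ → (Fin M → ℝ) and a continuous function ρ : (Fin M → ℝ) → ℝ such that f x = ρ (∑ i, ψ (x i)) for every x : Fin M → ℝ. -/
/-!
With `ψ t = (t, t², …, tᴹ)`, the map `Φ x = ∑ i, ψ (x i)` lists the first `M` power sums of the
coordinates. By Newton's identities these determine the elementary symmetric polynomials, hence
the polynomial `∏ i, (X - x i)` and the multiset of coordinates, so `Φ` separates permutation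
orbits. Moreover `x i ^ 2 ≤ Φ x 1`, so `Φ` is proper, hence a closed map and a quotient map onto
its closed range: a permutation-invariant continuous `f` descends to a continuous function on the
range, which Tietze's theorem extends to a continuous `ρ` on all of `ℝᴹ`.
-/

open Finset MvPolynomial Topology

universe u v

theorem MvPolynomial.aeval_esymm_eq_of_aeval_psum_eq {σ R : Type*} [Fintype σ] [CommRing R]
    [IsDomain R] [CharZero R] {x y : σ → R} {n : ℕ}
    (h : ∀ k ∈ Icc 1 n, aeval x (psum σ R k) = aeval y (psum σ R k)) {k : ℕ} (hk : k ≤ n) :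
    aeval x (esymm σ R k) = aeval y (esymm σ R k) := by
  induction k using Nat.strong_induction_on with
  | _ k ih =>
  rcases Nat.eq_zero_or_pos k with rfl | hk0
  · simp
  have newton (z : σ → R) := congrArg (aeval z) (mul_esymm_eq_sum σ R k)
  simp only [map_mul, map_sum, map_pow, map_neg, map_one, map_natCast] at newton
  refine mul_left_cancel₀ (Nat.cast_ne_zero.mpr hk0.ne' : (k : R) ≠ 0) ?_
  rw [newton x, newton y]
  congr 1
  refine sum_congr rfl fun a ha => ?_
  obtain ⟨hsum, hlt⟩ : a.1 + a.2 = k ∧ a.1 < k := by simpa using ha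
  rw [ih a.1 hlt (hlt.le.trans hk), h a.2 (mem_Icc.mpr ⟨by omega, by omega⟩)]

theorem Multiset.eq_of_esymm_eq {R : Type*} [CommRing R] [IsDomain R] {s t : Multiset R}
    (hcard : card s = card t) (h : ∀ k ≤ card s, s.esymm k = t.esymm k) : s = t := by
  have hprod : (s.map fun a => Polynomial.X - Polynomial.C a).prod =
      (t.map fun a => Polynomial.X - Polynomial.C a).prod := by
    rw [Multiset.prod_X_sub_X_eq_sum_esymm, Multiset.prod_X_sub_X_eq_sum_esymm, ← hcard]
    exact sum_congr rfl fun k hk => by rw [h k (Nat.lt_succ_iff.mp (mem_range.mp hk))]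
  simpa only [Polynomial.roots_multiset_prod_X_sub_C] using congrArg Polynomial.roots hprod

theorem Fintype.exists_perm_comp_eq_of_map_univ_eq {ι α : Type*} [Fintype ι] {x y : ι → α}
    (h : univ.val.map x = univ.val.map y) : ∃ σ : Equiv.Perm ι, x ∘ σ = y := by
  classical
  have hfiber (a : α) : Fintype.card {i // y i = a} = Fintype.card {i // x i = a} := by
    simpa only [Fintype.card_subtype, card_def, filter_val, Multiset.count_map, eq_comm (b := a)]
      using (congrArg (Multiset.count a) h).symm
  exact ⟨Equiv.ofFiberEquiv fun a => Fintype.equivOfCardEq (hfiber a),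
    funext (Equiv.ofFiberEquiv_map _)⟩

def powVec {R : Type*} [Monoid R] (n : ℕ) (t : R) : Fin n → R := fun k => t ^ ((k : ℕ) + 1)

theorem continuous_powVec {R : Type*} [Monoid R] [TopologicalSpace R] [ContinuousMul R]
    (n : ℕ) : Continuous (powVec n : R → Fin n → R) :=
  continuous_pi fun _ => continuous_pow _

section SumPowVec

variable {ι : Type*} [Fintype ι] {n : ℕ}

theorem sum_powVec_apply {R : Type*} [CommSemiring R] (x : ι → R) (k : Fin n) :
    (∑ i, powVec n (x i)) k = ∑ i, x i ^ ((k : ℕ) + 1) := by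
  simp [powVec]

theorem exists_perm_comp_eq_of_sum_powVec_eq {R : Type*} [CommRing R] [IsDomain R] [CharZero R]
    (hn : Fintype.card ι ≤ n) {x y : ι → R} (h : ∑ i, powVec n (x i) = ∑ i, powVec n (y i)) :
    ∃ σ : Equiv.Perm ι, x ∘ σ = y := by
  have hpsum : ∀ k ∈ Icc 1 (Fintype.card ι), aeval x (psum ι R k) = aeval y (psum ι R k) := by
    intro k hk
    obtain ⟨hk1, hkn⟩ := mem_Icc.mp hk
    have hk := congrFun h ⟨k - 1, by omega⟩
    rw [sum_powVec_apply, sum_powVec_apply, Nat.sub_add_cancel hk1] at hk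
    simpa [psum] using hk
  refine Fintype.exists_perm_comp_eq_of_map_univ_eq
    (Multiset.eq_of_esymm_eq (by simp) fun k hk => ?_)
  rw [← aeval_esymm_eq_multiset_esymm ι R, ← aeval_esymm_eq_multiset_esymm ι R]
  exact aeval_esymm_eq_of_aeval_psum_eq hpsum (by simpa using hk)

theorem abs_le_norm_sum_powVec_add_one (hn : Fintype.card ι ≤ n) (x : ι → ℝ) (i : ι) :
    |x i| ≤ ‖∑ j, powVec n (x j)‖ + 1 := by
  rcases lt_or_ge 1 n with h2 | h1
  · have hsq : x i ^ 2 ≤ (‖∑ j, powVec n (x j)‖ + 1) ^ 2 := calc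
      x i ^ 2 ≤ ∑ j, x j ^ 2 := single_le_sum (fun j _ => sq_nonneg (x j)) (mem_univ i)
      _ = (∑ j, powVec n (x j)) ⟨1, h2⟩ := (sum_powVec_apply x ⟨1, h2⟩).symm
      _ ≤ ‖∑ j, powVec n (x j)‖ := (Real.le_norm_self _).trans (norm_le_pi_norm _ _)
      _ ≤ _ := by nlinarith [norm_nonneg (∑ j, powVec n (x j))]
    exact abs_le_of_sq_le_sq hsq (by positivity)
  · have : Subsingleton ι := Fintype.card_le_one_iff_subsingleton.mp (hn.trans h1)
    have h0 : 0 < n := hn.trans_lt' (Fintype.card_pos_iff.mpr ⟨i⟩)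
    calc |x i| = |(∑ j, powVec n (x j)) ⟨0, h0⟩| := by
          rw [sum_powVec_apply, Fintype.sum_subsingleton _ i]; simp
      _ ≤ _ := by rw [← Real.norm_eq_abs]; exact (norm_le_pi_norm _ _).trans (by linarith)

theorem isProperMap_sum_powVec (hn : Fintype.card ι ≤ n) :
    IsProperMap fun x : ι → ℝ => ∑ i, powVec n (x i) := by
  have hcont : Continuous fun x : ι → ℝ => ∑ i, powVec n (x i) :=
    continuous_finsetSum _ fun i _ => (continuous_powVec n).comp (continuous_apply i)
  refine isProperMap_iff_isCompact_preimage.mpr ⟨hcont, fun K hK => ?_⟩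
  obtain ⟨C, hC⟩ := hK.isBounded.exists_norm_le
  refine Metric.isCompact_of_isClosed_isBounded (hK.isClosed.preimage hcont) ?_
  refine (Metric.isBounded_closedBall (x := 0) (r := C + 1)).subset fun x hx => ?_
  rw [mem_closedBall_zero_iff,
    pi_norm_le_iff_of_nonneg (by linarith [(norm_nonneg _).trans (hC _ hx)])]
  exact fun i => (abs_le_norm_sum_powVec_add_one hn x i).trans (by linarith [hC _ hx])

end SumPowVec

theorem IsClosedMap.exists_continuous_comp_eq {X : Type*} {Y : Type u} {Z : Type v}
    [TopologicalSpace X] [TopologicalSpace Y] [NormalSpace Y] [TopologicalSpace Z]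
    [TietzeExtension.{u, v} Z] {g : X → Y} (hg : IsClosedMap g) (hgc : Continuous g)
    {f : X → Z} (hf : Continuous f) (hfg : Function.FactorsThrough f g) :
    ∃ ρ : C(Y, Z), ρ ∘ g = f := by
  let G : C(X, Set.range g) := ⟨Set.rangeFactorization g, hgc.rangeFactorization⟩
  have hG : IsQuotientMap G := hg.isStrictMap hgc
  have hfG : Function.FactorsThrough f G := fun _ _ h => hfg (congrArg Subtype.val h)
  let ρ₀ := hG.lift ⟨f, hf⟩ hfG
  obtain ⟨ρ, hρ⟩ := ρ₀.exists_restrict_eq hg.isClosed_range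
  refine ⟨ρ, funext fun x => ?_⟩
  calc ρ (g x) = ρ₀ (G x) := DFunLike.congr_fun hρ (G x)
    _ = f x := DFunLike.congr_fun (hG.lift_comp ⟨f, hf⟩ hfG) x

theorem perm_invariant_iff_continuous_sum_decomposable_general (M : ℕ)
    (f : (Fin M → ℝ) → ℝ) (hf : Continuous f) :
    (∀ (σ : Equiv.Perm (Fin M)) (x : Fin M → ℝ), f (x ∘ σ) = f x) ↔
      ∃ (ψ : ℝ → (Fin M → ℝ)) (ρ : (Fin M → ℝ) → ℝ),
        Continuous ψ ∧ Continuous ρ ∧ ∀ x : Fin M → ℝ, f x = ρ (∑ i, ψ (x i)) := by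
  refine ⟨fun hinv => ?_, fun ⟨ψ, ρ, _, _, hfρ⟩ σ x => ?_⟩
  · have hM : Fintype.card (Fin M) ≤ M := (Fintype.card_fin M).le
    have hfΦ : Function.FactorsThrough f fun x : Fin M → ℝ => ∑ i, powVec M (x i) :=
      fun x y hxy => by
        obtain ⟨σ, rfl⟩ := exists_perm_comp_eq_of_sum_powVec_eq hM hxy
        exact (hinv σ x).symm
    have hΦ := isProperMap_sum_powVec hM
    obtain ⟨ρ, hρ⟩ := hΦ.isClosedMap.exists_continuous_comp_eq hΦ.continuous hf hfΦ
    exact ⟨powVec M, ρ, continuous_powVec M, ρ.continuous, fun x => (congrFun hρ x).symm⟩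
  · rw [hfρ, hfρ]
    exact congrArg ρ (Equiv.sum_comp σ (ψ ∘ x))

/-- A continuous function `f : (Fin M → ℝ) → ℝ` is permutation-invariant iff it is
continuously sum-decomposable through `ℝ^M`. -/
theorem perm_invariant_iff_continuous_sum_decomposable (M : ℕ) (hM : 0 < M)
    (f : (Fin M → ℝ) → ℝ) (hf : Continuous f) :
    (∀ (σ : Equiv.Perm (Fin M)) (x : Fin M → ℝ), f (x ∘ σ) = f x) ↔
      ∃ (ψ : ℝ → (Fin M → ℝ)) (ρ : (Fin M → ℝ) → ℝ),
        Continuous ψ ∧ Continuous ρ ∧ ∀ x : Fin M → ℝ, f x = ρ (∑ i, ψ (x i)) :=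
  perm_invariant_iff_continuous_sum_decomposable_general M f hf
end

section
/- Let M be a natural number and let X and Y be multisets of real numbers each of cardinality M. If for every k with 1 ≤ k ≤ M the power sums agree, i.e., ∑_{x ∈ X} x^k = ∑_{y ∈ Y} y^k, then X = Y. -/
/-!
Newton's identities express `k • e_k` through `e_0, …, e_{k-1}` and the power sums `p_1, …, p_k`,
so in characteristic zero equal power sums up to degree `M` force equal elementary symmetric
functions up to degree `M`. For multisets of size `M` these are all the coefficients of
`∏ (X - x)`, and a multiset is recovered as the roots of that polynomial.
-/

open Polynomial

namespace Multiset

variable {R : Type*} [CommRing R]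

theorem mul_esymm_eq_sum (s : Multiset R) (k : ℕ) :
    k * s.esymm k = (-1) ^ (k + 1) *
      ∑ a ∈ Finset.HasAntidiagonal.antidiagonal k with a.1 < k,
        (-1) ^ a.1 * s.esymm a.1 * (s.map (· ^ a.2)).sum := by
  classical
  have H := congrArg (MvPolynomial.aeval fun x : s ↦ (x : R))
    (MvPolynomial.mul_esymm_eq_sum s R k)
  have hpsum (m : ℕ) : ∑ x : s, (x : R) ^ m = (s.map (· ^ m)).sum := by
    rw [Finset.sum, map_univ s (· ^ m)]
  simpa only [map_mul, map_sum, map_pow, map_neg, map_one, map_natCast,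
    MvPolynomial.aeval_esymm_eq_multiset_esymm, MvPolynomial.psum, MvPolynomial.aeval_X,
    map_univ_coe, hpsum] using H

theorem esymm_eq_of_powerSums_eq [IsDomain R] [CharZero R] {s t : Multiset R} {n : ℕ}
    (h : ∀ k, 1 ≤ k → k ≤ n → (s.map (· ^ k)).sum = (t.map (· ^ k)).sum) :
    ∀ k ≤ n, s.esymm k = t.esymm k := by
  intro k
  induction k using Nat.strong_induction_on with
  | _ k ih =>
    intro hkn
    rcases Nat.eq_zero_or_pos k with rfl | hk
    · simp [esymm]
    have hsum : ∑ a ∈ Finset.HasAntidiagonal.antidiagonal k with a.1 < k,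
          (-1) ^ a.1 * s.esymm a.1 * (s.map (· ^ a.2)).sum =
        ∑ a ∈ Finset.HasAntidiagonal.antidiagonal k with a.1 < k,
          (-1) ^ a.1 * t.esymm a.1 * (t.map (· ^ a.2)).sum := by
      refine Finset.sum_congr rfl fun a ha ↦ ?_
      obtain ⟨hak, ha₁⟩ : a.1 + a.2 = k ∧ a.1 < k := by simpa using ha
      rw [ih a.1 ha₁ (by omega), h a.2 (by omega) (by omega)]
    have hmul : (k : R) * s.esymm k = k * t.esymm k := by
      rw [mul_esymm_eq_sum, mul_esymm_eq_sum, hsum]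
    exact mul_left_cancel₀ (Nat.cast_ne_zero.mpr hk.ne') hmul

theorem eq_of_card_eq_of_esymm_eq [IsDomain R] {s t : Multiset R} (hcard : card s = card t)
    (h : ∀ k ≤ card s, s.esymm k = t.esymm k) : s = t := by
  have hprod : (s.map fun a ↦ X - C a).prod = (t.map fun a ↦ X - C a).prod := by
    rw [prod_X_sub_X_eq_sum_esymm, prod_X_sub_X_eq_sum_esymm, ← hcard]
    refine Finset.sum_congr rfl fun k hk ↦ ?_
    rw [h k (Nat.lt_succ_iff.mp (Finset.mem_range.mp hk))]
  rw [← roots_multiset_prod_X_sub_C s, hprod, roots_multiset_prod_X_sub_C]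

end Multiset

/-- Two size-`M` multisets of reals with the same power sums `∑ x^k` for `1 ≤ k ≤ M`
are equal. -/
theorem multiset_eq_of_powerSums_eq (M : ℕ) (X Y : Multiset ℝ)
    (hX : Multiset.card X = M) (hY : Multiset.card Y = M)
    (h : ∀ k : ℕ, 1 ≤ k → k ≤ M →
      (X.map (fun x => x ^ k)).sum = (Y.map (fun y => y ^ k)).sum) :
    X = Y :=
  Multiset.eq_of_card_eq_of_esymm_eq (hX.trans hY.symm) fun k hk ↦
    Multiset.esymm_eq_of_powerSums_eq h k (hX ▸ hk)
end
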